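/- Let G be a graph, t > 0, and let H ⊆ G maximize φ(H') = d(H')(1 + γ(|H'|)) over subgraphs of G, where γ(x) = min{1, 1/log₂(2x/t)}. Then for every S ⊆ V(H) with t ≤ |S| ≤ 2|H|/3, the induced average degree satisfies d(H[S]) ≤ d(H)·(1 − 64·ρ_t(|S|)), where ρ_t(x) = 1/(256(log₂(4x/t))²). -/

import Mathlib

open Finset

/-- Number of edges of a simple graph. -/
noncomputable def nE {V : Type*} (H : SimpleGraph V) : ℕ := Nat.card H.edgeSet

/-- Average degree `2 e(H) / |A|` of a graph `H` with vertex set `A`. -/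
noncomputable def avgDeg {V : Type*} (H : SimpleGraph V) (A : Finset V) : ℝ :=
  2 * nE H / A.card

/-- `γ(x) = min {1, 1 / log₂(2x/t)}`. -/
noncomputable def gam (t x : ℝ) : ℝ := min 1 (1 / Real.logb 2 (2 * x / t))

/-- `ρ_t(x) = 1/(256 (log₂(4x/t))²)` for `x ≥ t` (and `0` below `t`). -/
noncomputable def rho (t x : ℝ) : ℝ :=
  if x < t then 0 else 1 / (256 * (Real.logb 2 (4 * x / t)) ^ 2)

/-- `(A, H)` is a subgraph of `G` with vertex set `A`. -/
def IsSubgraphPair {V : Type*} (G : SimpleGraph V) (A : Finset V) (H : SimpleGraph V) : Prop :=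
  H ≤ G ∧ ∀ x y, H.Adj x y → x ∈ A ∧ y ∈ A

/-- The subgraph of `H` induced on `S`. -/
def restrict {V : Type*} (H : SimpleGraph V) (S : Finset V) : SimpleGraph V where
  Adj x y := H.Adj x y ∧ x ∈ S ∧ y ∈ S
  symm := ⟨fun x y ⟨h, hx, hy⟩ => ⟨h.symm, hy, hx⟩⟩
  loopless := ⟨fun x ⟨h, _, _⟩ => H.loopless.irrefl x h⟩

lemma key_ineq (a b : ℝ) (ha : 1 ≤ a) (hb : a + 1/2 ≤ b) :
    1 + 1/b ≤ (1 + 1/a) * (1 - 1/(4*(1+a)^2)) := by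
  have ha0 : 0 < a := by linarith
  have hb0 : 0 < b := by linarith
  have key : 0 ≤ (1 + 1/a) * (1 - 1/(4*(1+a)^2)) - (1 + 1/b) := by
    have : (1 + 1/a) * (1 - 1/(4*(1+a)^2)) - (1 + 1/b) =
        (4*(a+1)*(b-a) - b) / (4*a*b*(1+a)) := by
      field_simp
      ring
    rw [this]
    apply div_nonneg _ (by positivity)
    nlinarith [mul_nonneg (by linarith : (0:ℝ) ≤ 4*(a+1) - 1) (by linarith : (0:ℝ) ≤ b - a - 1/2)]
  linarith

lemma logb_three_halves : (1:ℝ)/2 ≤ Real.logb 2 (3/2) := by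
  have h : Real.logb 2 ((3/2:ℝ)^2) = 2 * Real.logb 2 (3/2) := by
    rw [Real.logb_pow]; push_cast; ring
  have h2 : Real.logb 2 2 ≤ Real.logb 2 ((3/2:ℝ)^2) :=
    Real.logb_le_logb_of_le one_lt_two two_pos (by norm_num)
  rw [Real.logb_self_eq_one one_lt_two, h] at h2
  linarith

/-- If `H` (with vertex set `A`) is a subgraph of `G` maximizing
`φ(H') = d(H')(1 + γ(|H'|))` over all (nonempty) subgraphs of `G`, then every `S ⊆ A` with
`t ≤ |S| ≤ 2|A|/3` satisfies `d(H[S]) ≤ d(H) (1 − 64 ρ_t(|S|))`. -/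
theorem stmt_18 {V : Type*} [Fintype V] (G : SimpleGraph V) (t : ℝ) (ht : 0 < t)
    (A : Finset V) (H : SimpleGraph V) (hsub : IsSubgraphPair G A H) (hA : A.Nonempty)
    (hmax : ∀ (A' : Finset V) (H' : SimpleGraph V), IsSubgraphPair G A' H' → A'.Nonempty →
      avgDeg H' A' * (1 + gam t A'.card) ≤ avgDeg H A * (1 + gam t A.card)) :
    ∀ S ⊆ A, t ≤ (S.card : ℝ) → (S.card : ℝ) ≤ 2 * A.card / 3 →
      avgDeg (restrict H S) S ≤ avgDeg H A * (1 - 64 * rho t S.card) := by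
  intro S hSA hts hs23
  set s : ℝ := (S.card : ℝ) with hs
  set n : ℝ := (A.card : ℝ) with hn
  have hs0 : 0 < s := lt_of_lt_of_le ht hts
  have hn0 : 0 < n := by
    have : s ≤ 2 * n / 3 := hs23
    linarith
  -- S nonempty
  have hSne : S.Nonempty := Finset.card_pos.mp (Nat.cast_pos (α := ℝ) |>.mp hs0)
  -- restrict H S is a subgraph pair
  have hpair : IsSubgraphPair G S (restrict H S) := by
    constructor
    · intro x y hxy
      exact hsub.1 hxy.1
    · intro x y hxy
      exact ⟨hxy.2.1, hxy.2.2⟩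
  have hm := hmax S (restrict H S) hpair hSne
  -- set a, b
  set a : ℝ := Real.logb 2 (2 * s / t) with hadef
  set b : ℝ := Real.logb 2 (2 * n / t) with hbdef
  have h2s : (2:ℝ) ≤ 2 * s / t := by
    rw [le_div_iff₀ ht]; linarith
  have ha1 : 1 ≤ a := by
    have := Real.logb_le_logb_of_le one_lt_two two_pos h2s
    rwa [Real.logb_self_eq_one one_lt_two] at this
  have hab : a + 1/2 ≤ b := by
    have hmul : (3/2 : ℝ) * (2 * s / t) ≤ 2 * n / t := by
      rw [show (3/2 : ℝ) * (2 * s / t) = 3 * s / t by ring, div_le_div_iff₀ ht ht]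
      nlinarith
    have h1 : Real.logb 2 ((3/2 : ℝ) * (2 * s / t)) ≤ b :=
      Real.logb_le_logb_of_le one_lt_two (by positivity) hmul
    rw [Real.logb_mul (by norm_num) (by positivity)] at h1
    have := logb_three_halves
    linarith
  have hb1 : 1 ≤ b := by linarith
  have ha0 : 0 < a := by linarith
  have hb0 : 0 < b := by linarith
  -- compute gam values
  have hgs : gam t s = 1 / a := by
    rw [gam, min_eq_right]
    rw [div_le_one ha0]; exact ha1
  have hgn : gam t n = 1 / b := by
    rw [gam, min_eq_right]
    rw [div_le_one hb0]; exact hb1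
  -- compute rho
  have hrho : rho t s = 1 / (256 * (1 + a)^2) := by
    rw [rho, if_neg (not_lt.mpr hts)]
    have h4 : (4:ℝ) * s / t = 2 * (2 * s / t) := by ring
    rw [h4, Real.logb_mul (by norm_num) (by positivity),
      Real.logb_self_eq_one one_lt_two]
  -- main chain
  have hkey : 1 + 1/b ≤ (1 + 1/a) * (1 - 1/(4*(1+a)^2)) := key_ineq a b ha1 hab
  have hdH : 0 ≤ avgDeg H A := by
    rw [avgDeg]; positivity
  have h64 : 1 - 64 * rho t s = 1 - 1/(4*(1+a)^2) := by
    have h1a : (0:ℝ) < 1 + a := by linarith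
    rw [hrho]; field_simp; ring
  rw [h64]
  rw [hgs, hgn] at hm
  have hstep : avgDeg H A * (1 + 1/b) ≤ avgDeg H A * ((1 + 1/a) * (1 - 1/(4*(1+a)^2))) :=
    mul_le_mul_of_nonneg_left hkey hdH
  have hfinal : avgDeg (restrict H S) S * (1 + 1/a) ≤
      (avgDeg H A * (1 - 1/(4*(1+a)^2))) * (1 + 1/a) := by
    calc avgDeg (restrict H S) S * (1 + 1/a) ≤ avgDeg H A * (1 + 1/b) := hm
    _ ≤ avgDeg H A * ((1 + 1/a) * (1 - 1/(4*(1+a)^2))) := hstep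
    _ = (avgDeg H A * (1 - 1/(4*(1+a)^2))) * (1 + 1/a) := by ring
  have hpos : 0 < 1 + 1/a := by positivity
  exact le_of_mul_le_mul_right hfinal hpos
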